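/- Let s ∈ ℕ and let L : (ℂ²)^{⊗2s} →ₗ[ℂ] ℂ be a linear functional. Define E : ℝ → ℂ by E(θ) = L(u_1(θ) ⊗ ⋯ ⊗ u_{2s}(θ)), where u_j(θ) = e₀ + exp(iθ)·e₁ for 1 ≤ j ≤ s and u_j(θ) = e₀ + exp(−iθ)·e₁ for s+1 ≤ j ≤ 2s. Then E is differentiable and E'(θ) = i · [ Σ_{j=1}^{s} exp(iθ) · L(…⊗ e₁ ⊗…) − Σ_{j=s+1}^{2s} exp(−iθ) · L(…⊗ e₁ ⊗…) ], where in the j-th summand the j-th tensor factor is e₁ and every other factor l is u_l(θ). (This gives the derivative of a parameterised quantum circuit expectation ⟨0|U†(θ)HU(θ)|0⟩, which has an equal number of occurrences of θ and −θ, as a single ZX diagram.) -/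

import Mathlib

/-! `E` is the multilinear map `M = L ∘ tprod` evaluated along the curve `θ ↦ (u_j(θ))_j`.
Multilinear maps on finite-dimensional spaces are continuous (expand every argument in a basis),
hence differentiable, and the Leibniz rule gives `E'(θ) = ∑_j M(u_1, …, u_j', …, u_{2s})`, where
`u_j' = ± i e^{± iθ} e₁`; pulling the scalar out of the `j`-th slot gives the claimed formula. -/

open scoped TensorProduct

noncomputable section

/-- `ℂ²` with standard basis vectors. -/
abbrev C2 : Type := ℂ × ℂ

def e0 : C2 := (1, 0)
def e1 : C2 := (0, 1)

/-- The `j`-th tensor factor of a circuit expectation diagram: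
`u_j(θ) = e₀ + exp(iθ)·e₁` for `j < s` and `u_j(θ) = e₀ + exp(−iθ)·e₁` otherwise. -/
def u (s : ℕ) (θ : ℝ) (j : Fin (2 * s)) : C2 :=
  if (j : ℕ) < s then e0 + Complex.exp (Complex.I * (θ : ℂ)) • e1
  else e0 + Complex.exp (-(Complex.I * (θ : ℂ))) • e1

namespace MultilinearMap

theorem continuous_of_finiteDimensional {𝕜 ι F : Type*} {E : ι → Type*}
    [NontriviallyNormedField 𝕜] [CompleteSpace 𝕜] [Fintype ι] [∀ i, AddCommGroup (E i)]
    [∀ i, Module 𝕜 (E i)] [∀ i, TopologicalSpace (E i)] [∀ i, IsTopologicalAddGroup (E i)]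
    [∀ i, ContinuousSMul 𝕜 (E i)] [∀ i, T2Space (E i)] [∀ i, FiniteDimensional 𝕜 (E i)]
    [AddCommGroup F] [Module 𝕜 F] [TopologicalSpace F] [ContinuousAdd F] [ContinuousSMul 𝕜 F]
    (M : MultilinearMap 𝕜 E F) : Continuous M := by
  classical
  let b i := Module.finBasis 𝕜 (E i)
  have hM : ⇑M = fun m => ∑ r : (i : ι) → Fin _, (∏ i, (b i).coord (r i) (m i)) •
      M fun i => b i (r i) := by
    funext m
    conv_lhs => rw [← funext fun i => (b i).sum_repr (m i)]
    simp only [map_sum, map_smul_univ, Module.Basis.coord_apply]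
  rw [hM]
  refine continuous_finsetSum _ fun r _ => (continuous_finsetProd _ fun i _ => ?_).smul
    continuous_const
  exact ((b i).coord (r i)).continuous_of_finiteDimensional.comp (continuous_apply i)

theorem hasDerivAt_comp {𝕜 ι F : Type*} {E : ι → Type*} [NontriviallyNormedField 𝕜]
    [CompleteSpace 𝕜] [Fintype ι] [DecidableEq ι] [∀ i, NormedAddCommGroup (E i)]
    [∀ i, NormedSpace 𝕜 (E i)] [∀ i, FiniteDimensional 𝕜 (E i)] [NormedAddCommGroup F]
    [NormedSpace 𝕜 F] (M : MultilinearMap 𝕜 E F) {g : ∀ i, 𝕜 → E i} {g' : ∀ i, E i} {t : 𝕜}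
    (hg : ∀ i, HasDerivAt (g i) (g' i) t) :
    HasDerivAt (fun t => M fun i => g i t)
      (∑ i, M (Function.update (fun j => g j t) i (g' i))) t := by
  let f : ContinuousMultilinearMap 𝕜 E F := ⟨M, M.continuous_of_finiteDimensional⟩
  have := (f.hasFDerivAt _).comp_hasDerivAt t (hasDerivAt_pi.2 hg)
  rwa [ContinuousMultilinearMap.linearDeriv_apply] at this

end MultilinearMap

theorem hasDerivAt_const_add_cexp_mul_smul {V : Type*} [NormedAddCommGroup V] [NormedSpace ℂ V]
    (v w : V) (a : ℂ) (θ : ℝ) :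
    HasDerivAt (fun t : ℝ => w + Complex.exp (a * t) • v) ((a * Complex.exp (a * θ)) • v) θ := by
  have h : HasDerivAt (fun z : ℂ => Complex.exp (a * z)) (Complex.exp (a * θ) * a) θ :=
    ((hasDerivAt_id (θ : ℂ)).const_mul a).cexp.congr_deriv (by simp)
  simpa [mul_comm] using (h.comp_ofReal.smul_const v).const_add w

theorem hasDerivAt_u (s : ℕ) (θ : ℝ) (j : Fin (2 * s)) :
    HasDerivAt (fun t => u s t j)
      (if (j : ℕ) < s then (Complex.I * Complex.exp (Complex.I * θ)) • e1
        else (-Complex.I * Complex.exp (-(Complex.I * θ))) • e1) θ := by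
  unfold u
  split_ifs
  · exact hasDerivAt_const_add_cexp_mul_smul e1 e0 Complex.I θ
  · simpa only [neg_mul] using hasDerivAt_const_add_cexp_mul_smul e1 e0 (-Complex.I) θ

/-- the derivative of a parameterised quantum circuit expectation,
with equal numbers of occurrences of `θ` and `−θ`, as a single ZX diagram. -/
theorem deriv_circuit_expectation (s : ℕ)
    (L : (⨂[ℂ] _ : Fin (2 * s), C2) →ₗ[ℂ] ℂ)
    (E : ℝ → ℂ) (hE : ∀ θ, E θ = L (⨂ₜ[ℂ] j, u s θ j)) (θ : ℝ) :
    HasDerivAt E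
      (Complex.I *
        ((∑ j ∈ Finset.univ.filter (fun j : Fin (2 * s) => (j : ℕ) < s),
            Complex.exp (Complex.I * (θ : ℂ)) *
              L (⨂ₜ[ℂ] l, (if l = j then e1 else u s θ l))) -
         (∑ j ∈ Finset.univ.filter (fun j : Fin (2 * s) => ¬ (j : ℕ) < s),
            Complex.exp (-(Complex.I * (θ : ℂ))) *
              L (⨂ₜ[ℂ] l, (if l = j then e1 else u s θ l)))))
      θ := by
  let M := L.compMultilinearMap (PiTensorProduct.tprod ℂ)
  have hEM : E = fun t => M.restrictScalars ℝ fun j => u s t j := funext hE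
  have hterm (j : Fin (2 * s)) (c : ℂ) :
      M (Function.update (fun l => u s θ l) j (c • e1)) =
        c * L (⨂ₜ[ℂ] l, (if l = j then e1 else u s θ l)) := by
    rw [M.map_update_smul, smul_eq_mul]
    simp only [M, LinearMap.compMultilinearMap_apply]
    congr 3
    exact funext (Function.update_apply (fun l => u s θ l) j e1)
  rw [hEM]
  refine ((M.restrictScalars ℝ).hasDerivAt_comp (hasDerivAt_u s θ)).congr_deriv ?_
  simp only [MultilinearMap.coe_restrictScalars, apply_ite, hterm]
  rw [Finset.sum_ite, mul_sub, sub_eq_add_neg, Finset.mul_sum, Finset.mul_sum,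
    ← Finset.sum_neg_distrib]
  congr 1 <;> exact Finset.sum_congr rfl fun j _ => by ring
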